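/- arXiv:1506.06488 — 4 statements merged into one kernel-verified Lean document; each statement's English description precedes it below -/
import Mathlib

section
/- Let n be an odd positive integer, and let X and Y be finite sets each of cardinality n equipped with transitive actions of DihedralGroup n. Then X and Y are equivariantly isomorphic: there exists a bijection e : X → Y such that e(g • x) = g • e(x) for all g ∈ DihedralGroup n and x ∈ X. -/
open DihedralGroup

/-- If two points of pretransitive `G`-sets have stabilizers with `≤`, there is an
equivariant map sending one to the other. -/
lemma aux_exists_equivariant_map {G : Type*} [Group G] {X Y : Type*}
    [MulAction G X] [MulAction G Y] [MulAction.IsPretransitive G X]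
    (x0 : X) (y0 : Y)
    (h : MulAction.stabilizer G x0 ≤ MulAction.stabilizer G y0) :
    ∃ f : X → Y, f x0 = y0 ∧ ∀ (g : G) (x : X), f (g • x) = g • f x := by
  have hex : ∀ x : X, ∃ g : G, g • x0 = x := fun x => MulAction.exists_smul_eq G x0 x
  classical
  refine ⟨fun x => (Classical.choose (hex x)) • y0, ?_, ?_⟩
  · have hg : Classical.choose (hex x0) • x0 = x0 := Classical.choose_spec (hex x0)
    exact h hg
  · intro g x
    have hg1 : Classical.choose (hex (g • x)) • x0 = g • x := Classical.choose_spec (hex (g • x))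
    have hg2 : Classical.choose (hex x) • x0 = x := Classical.choose_spec (hex x)
    set a := Classical.choose (hex (g • x))
    set b := Classical.choose (hex x)
    have hst : ((g * b)⁻¹ * a) • x0 = x0 := by
      have hab : a • x0 = (g * b) • x0 := by rw [hg1, mul_smul, hg2]
      rw [mul_smul, hab, ← mul_smul, inv_mul_cancel, one_smul]
    have := h hst
    rw [MulAction.mem_stabilizer_iff, mul_smul] at this
    calc a • y0 = (g * b) • ((g * b)⁻¹ • a • y0) := (smul_inv_smul _ _).symm
      _ = g • b • y0 := by rw [this, mul_smul]

/-- Points of pretransitive `G`-sets with equal stabilizers give an equivariant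
isomorphism. -/
lemma aux_equiv_of_stabilizer_eq {G : Type*} [Group G] {X Y : Type*}
    [MulAction G X] [MulAction G Y]
    [MulAction.IsPretransitive G X] [MulAction.IsPretransitive G Y]
    (x0 : X) (y0 : Y)
    (h : MulAction.stabilizer G x0 = MulAction.stabilizer G y0) :
    ∃ e : X ≃ Y, ∀ (g : G) (x : X), e (g • x) = g • e x := by
  obtain ⟨f, hf0, hf⟩ := aux_exists_equivariant_map x0 y0 h.le
  obtain ⟨f', hf'0, hf'⟩ := aux_exists_equivariant_map y0 x0 h.ge
  have left : ∀ x : X, f' (f x) = x := by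
    intro x
    obtain ⟨g, hg⟩ := MulAction.exists_smul_eq G x0 x
    rw [← hg, hf, hf0, hf', hf'0]
  have right : ∀ y : Y, f (f' y) = y := by
    intro y
    obtain ⟨g, hg⟩ := MulAction.exists_smul_eq G y0 y
    rw [← hg, hf', hf'0, hf, hf0]
  exact ⟨⟨f, f', left, right⟩, hf⟩

/-- A subgroup of order 2 is generated by an element `h ≠ 1` with `h * h = 1`. -/
lemma aux_subgroup_card_two {G : Type*} [Group G] (H : Subgroup G)
    (hH : Nat.card H = 2) :
    ∃ h : G, h ≠ 1 ∧ h * h = 1 ∧ H = Subgroup.zpowers h := by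
  haveI : Fact (Nat.Prime 2) := ⟨Nat.prime_two⟩
  haveI : Finite H := Nat.finite_of_card_ne_zero (by omega)
  haveI := isCyclic_of_prime_card (α := ↥H) hH
  obtain ⟨g, hg⟩ := IsCyclic.exists_generator (α := H)
  have hord : orderOf (g : G) = 2 := by
    rw [Subgroup.orderOf_coe, orderOf_eq_card_of_forall_mem_zpowers hg, hH]
  refine ⟨(g : G), ?_, ?_, ?_⟩
  · intro h1
    rw [h1, orderOf_one] at hord
    omega
  · have := pow_orderOf_eq_one (g : G)
    rwa [hord, pow_two] at this
  · ext x
    constructor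
    · intro hx
      obtain ⟨k, hk⟩ := hg ⟨x, hx⟩
      refine ⟨k, ?_⟩
      have := congrArg (Subtype.val) hk
      simpa using this
    · rintro ⟨k, rfl⟩
      exact Subgroup.zpow_mem H g.2 k

/-- In a pretransitive action of `DihedralGroup n` on a set of cardinality `n`,
stabilizers have cardinality 2. -/
lemma aux_stab_card (n : ℕ) (hn : 0 < n) (X : Type*) [Finite X]
    [MulAction (DihedralGroup n) X] [MulAction.IsPretransitive (DihedralGroup n) X]
    (hX : Nat.card X = n) (x0 : X) :
    Nat.card (MulAction.stabilizer (DihedralGroup n) x0) = 2 := by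
  haveI : NeZero n := ⟨hn.ne'⟩
  have hG : Nat.card (DihedralGroup n) = 2 * n := by
    rw [Nat.card_eq_fintype_card, DihedralGroup.card]
  have horb : Nat.card (MulAction.orbit (DihedralGroup n) x0) = n := by
    rw [MulAction.orbit_eq_univ, Nat.card_congr (Equiv.Set.univ X), hX]
  have hq : Nat.card (DihedralGroup n ⧸ MulAction.stabilizer (DihedralGroup n) x0) = n := by
    rw [← Nat.card_congr (MulAction.orbitEquivQuotientStabilizer (DihedralGroup n) x0), horb]
  have := Subgroup.card_eq_card_quotient_mul_card_subgroup
    (MulAction.stabilizer (DihedralGroup n) x0)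
  rw [hG, hq] at this
  have h2 : n * 2 = n * Nat.card (MulAction.stabilizer (DihedralGroup n) x0) := by omega
  exact (Nat.eq_of_mul_eq_mul_left hn h2).symm

/-- For `n` odd, any two transitive actions of the dihedral group of order `2n`
on sets of cardinality `n` are equivariantly isomorphic. -/
theorem dihedral_odd_transitive_actions_equivariantly_iso
    (n : ℕ) (hn : 0 < n) (hodd : Odd n)
    (X Y : Type*) [Finite X] [Finite Y]
    [MulAction (DihedralGroup n) X] [MulAction (DihedralGroup n) Y]
    [MulAction.IsPretransitive (DihedralGroup n) X]
    [MulAction.IsPretransitive (DihedralGroup n) Y]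
    (hX : Nat.card X = n) (hY : Nat.card Y = n) :
    ∃ e : X ≃ Y, ∀ (g : DihedralGroup n) (x : X), e (g • x) = g • e x := by
  haveI : NeZero n := ⟨hn.ne'⟩
  have hXne : Nonempty X := by
    have : 0 < Nat.card X := by omega
    exact (Nat.card_pos_iff.mp this).1
  have hYne : Nonempty Y := by
    have : 0 < Nat.card Y := by omega
    exact (Nat.card_pos_iff.mp this).1
  obtain ⟨x0⟩ := hXne
  obtain ⟨y0⟩ := hYne
  -- inverse of 2 in ZMod n
  obtain ⟨t, ht⟩ := hodd
  set m : ZMod n := ((t + 1 : ℕ) : ZMod n) with hm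
  have h2m : (2 : ZMod n) * m = 1 := by
    have : ((2 * (t + 1) : ℕ) : ZMod n) = ((n + 1 : ℕ) : ZMod n) := by
      congr 1; omega
    push_cast at this
    rw [ZMod.natCast_self, zero_add] at this
    rw [hm]; push_cast; exact this
  -- the stabilizers are generated by reflections
  have hsr : ∀ (h : DihedralGroup n), h ≠ 1 → h * h = 1 → ∃ i : ZMod n, h = sr i := by
    rintro (i | i) h1 h2
    · exfalso
      rw [r_mul_r] at h2
      rw [one_def] at h2
      have hii : i + i = 0 := by injection h2
      have : i = 0 := by
        have := congrArg (fun z => m * z) hii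
        simp only [mul_zero] at this
        calc i = 1 * i := (one_mul i).symm
          _ = ((2 : ZMod n) * m) * i := by rw [h2m]
          _ = m * (i + i) := by ring
          _ = 0 := this
      rw [this, ← one_def] at h1; exact h1 rfl
    · exact ⟨i, rfl⟩
  obtain ⟨hx, hx1, hx2, hxz⟩ := aux_subgroup_card_two _ (aux_stab_card n hn X hX x0)
  obtain ⟨hy, hy1, hy2, hyz⟩ := aux_subgroup_card_two _ (aux_stab_card n hn Y hY y0)
  obtain ⟨i, rfl⟩ := hsr hx hx1 hx2
  obtain ⟨j, rfl⟩ := hsr hy hy1 hy2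
  -- conjugate y0 so that the stabilizers agree
  set k : ZMod n := m * (i - j) with hk
  set g : DihedralGroup n := r k with hg
  have hconj : g⁻¹ * sr j * (g⁻¹)⁻¹ = sr i := by
    rw [inv_inv, hg]
    have hrk : r k * r (-k) = 1 := by
      rw [r_mul_r, add_neg_cancel]; exact one_def.symm
    rw [inv_eq_of_mul_eq_one_right hrk, r_mul_sr, sr_mul_r]
    congr 1
    rw [hk]
    have : j - -(m * (i - j)) + m * (i - j) = j + (2 * m) * (i - j) := by ring
    rw [this, h2m, one_mul]; ring
  have hstab : MulAction.stabilizer (DihedralGroup n) x0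
      = MulAction.stabilizer (DihedralGroup n) (g⁻¹ • y0) := by
    rw [MulAction.stabilizer_smul_eq_stabilizer_map_conj, hyz, hxz,
      MonoidHom.map_zpowers]
    congr 1
    simp only [MulEquiv.coe_toMonoidHom, MulAut.conj_apply]
    exact hconj.symm
  exact aux_equiv_of_stabilizer_eq x0 (g⁻¹ • y0) hstab
end

section
/- Let n be an odd positive integer and let X be a finite set of cardinality n with a transitive action of DihedralGroup n. Then: (1) for every i : ZMod n, the reflection sr i fixes exactly one point of X; and (2) for every i : ZMod n with i ≠ 0, the rotation r i fixes no point of X. -/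
/-!
Since `|D_n| = 2n` and the action is transitive on `n` points, every stabilizer has order 2.
Its elements square to 1, which for odd `n` no nontrivial rotation does, so each stabilizer is
`{1, sr j}` for a reflection `sr j`. All reflections are conjugate, so each fixes a point. If
`sr i` fixes `x` and `c • x`, then `c⁻¹ * sr i * c` is the nontrivial element of the stabilizer
of `x`, namely `sr i`; the centralizer of `sr i` is `{1, sr i}`, so `c • x = x`.
-/

open DihedralGroup MulAction

theorem ZMod.exists_add_self_eq_of_odd {n : ℕ} (hn : Odd n) (a : ZMod n) : ∃ k, k + k = a := by
  let u := ZMod.unitOfCoprime 2 hn.coprime_two_left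
  refine ⟨(u⁻¹ : (ZMod n)ˣ) * a, ?_⟩
  have hu : (u : ZMod n) = 2 := ZMod.coe_unitOfCoprime 2 _
  rw [← two_mul, ← mul_assoc, ← hu, Units.mul_inv, one_mul]

theorem Subgroup.eq_of_ne_one_of_card_eq_two {G : Type*} [Group G] {H : Subgroup G}
    (hH : Nat.card H = 2) {a b : G} (ha : a ∈ H) (hb : b ∈ H) (ha1 : a ≠ 1) (hb1 : b ≠ 1) :
    a = b := by
  have := ((Nat.card_eq_two_iff' (1 : H)).1 hH).unique (y₁ := ⟨a, ha⟩) (y₂ := ⟨b, hb⟩)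
    (by simpa [Subtype.ext_iff] using ha1) (by simpa [Subtype.ext_iff] using hb1)
  exact congrArg Subtype.val this

theorem Subgroup.pow_two_eq_one_of_card_eq_two {G : Type*} [Group G] {H : Subgroup G}
    (hH : Nat.card H = 2) {g : G} (hg : g ∈ H) : g ^ 2 = 1 :=
  orderOf_dvd_iff_pow_eq_one.1 (hH ▸ Subgroup.orderOf_dvd_natCard H hg)

theorem IsConj.fixedBy_nonempty {G X : Type*} [Group G] [MulAction G X] {g h : G}
    (hgh : IsConj g h) (hg : (fixedBy X g).Nonempty) : (fixedBy X h).Nonempty := by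
  obtain ⟨c, rfl⟩ := isConj_iff.1 hgh
  rw [← smul_fixedBy]
  exact hg.smul_set

namespace MulAction

variable {G X : Type*} [Group G] [MulAction G X] [IsPretransitive G X]

theorem card_stabilizer_mul_card (x : X) :
    Nat.card (stabilizer G x) * Nat.card X = Nat.card G := by
  rw [← index_stabilizer_of_transitive G x, Subgroup.card_mul_index]

theorem fixedBy_subsingleton_of_card_stabilizer_eq_two
    (hstab : ∀ x : X, Nat.card (stabilizer G x) = 2) {g : G} (hg : g ≠ 1)
    (hcent : ∀ c : G, Commute c g → c = 1 ∨ c = g) : (fixedBy X g).Subsingleton := by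
  intro x hx y hy
  obtain ⟨c, rfl⟩ := exists_smul_eq G x y
  have hconj : c⁻¹ * g * c = g := by
    refine Subgroup.eq_of_ne_one_of_card_eq_two (hstab x) ?_ hx ?_ hg
    · rw [mem_stabilizer_iff, mul_smul, mul_smul, hy, inv_smul_smul]
    · rwa [ne_eq, mul_assoc, inv_mul_eq_one, eq_comm, mul_eq_right]
  rw [mul_assoc, inv_mul_eq_iff_eq_mul] at hconj
  rcases hcent c hconj.symm with rfl | rfl
  · rw [one_smul]
  · exact hx.symm

end MulAction

namespace DihedralGroup

variable {n : ℕ}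

theorem sr_ne_one (i : ZMod n) : sr i ≠ 1 := by
  rw [one_def]
  nofun

theorem eq_zero_of_r_pow_two_eq_one (hn : Odd n) {i : ZMod n} (h : r i ^ 2 = 1) : i = 0 := by
  rwa [r_pow, one_def, r.injEq, Nat.cast_two, mul_two,
    ZMod.add_self_eq_zero_iff_eq_zero hn] at h

theorem isConj_sr (hn : Odd n) (i j : ZMod n) : IsConj (sr i) (sr j) := by
  obtain ⟨k, hk⟩ := ZMod.exists_add_self_eq_of_odd hn (i - j)
  refine isConj_iff.2 ⟨r k, ?_⟩
  rw [inv_r, r_mul_sr, sr_mul_r]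
  congr 1
  linear_combination -hk

theorem eq_one_or_eq_sr_of_commute (hn : Odd n) {g : DihedralGroup n} {i : ZMod n}
    (h : Commute g (sr i)) : g = 1 ∨ g = sr i := by
  have h' := h.eq
  rcases g with m | m
  · rw [r_mul_sr, sr_mul_r, sr.injEq] at h'
    left
    rw [one_def, r.injEq, ← ZMod.add_self_eq_zero_iff_eq_zero hn]
    linear_combination -h'
  · rw [sr_mul_sr, sr_mul_sr, r.injEq] at h'
    right
    rw [sr.injEq, ← sub_eq_zero, ← ZMod.add_self_eq_zero_iff_eq_zero hn]
    linear_combination -h'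

variable {X : Type*} [MulAction (DihedralGroup n) X] {x : X}

theorem r_smul_ne_self_of_card_stabilizer_eq_two (hn : Odd n)
    (hx : Nat.card (stabilizer (DihedralGroup n) x) = 2) {i : ZMod n} (hi : i ≠ 0) :
    r i • x ≠ x :=
  fun hfix => hi (eq_zero_of_r_pow_two_eq_one hn (Subgroup.pow_two_eq_one_of_card_eq_two hx hfix))

theorem exists_sr_smul_eq_self_of_card_stabilizer_eq_two (hn : Odd n)
    (hx : Nat.card (stabilizer (DihedralGroup n) x) = 2) : ∃ j : ZMod n, sr j • x = x := by
  obtain ⟨⟨g, hg⟩, hg1⟩ := ((Nat.card_eq_two_iff' (1 : stabilizer _ x)).1 hx).exists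
  rcases g with i | j
  · exact absurd hg (r_smul_ne_self_of_card_stabilizer_eq_two hn hx
      fun hi => hg1 (by subst hi; rfl))
  · exact ⟨j, hg⟩

end DihedralGroup

theorem dihedral_odd_transitive_action_fixed_points_general
    (n : ℕ) (hodd : Odd n)
    (X : Type*) [MulAction (DihedralGroup n) X]
    [MulAction.IsPretransitive (DihedralGroup n) X]
    (hX : Nat.card X = n) :
    (∀ i : ZMod n, ∃! x : X, sr i • x = x) ∧
    (∀ i : ZMod n, i ≠ 0 → ∀ x : X, r i • x ≠ x) := by
  have hstab (x : X) : Nat.card (stabilizer (DihedralGroup n) x) = 2 := by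
    have := card_stabilizer_mul_card (G := DihedralGroup n) x
    rw [hX, nat_card] at this
    exact Nat.eq_of_mul_eq_mul_right hodd.pos this
  refine ⟨fun i => ?_, fun i hi x => r_smul_ne_self_of_card_stabilizer_eq_two hodd (hstab x) hi⟩
  obtain ⟨x₀⟩ : Nonempty X := (Nat.card_pos_iff.1 (hX ▸ hodd.pos)).1
  obtain ⟨j, hj⟩ := exists_sr_smul_eq_self_of_card_stabilizer_eq_two hodd (hstab x₀)
  obtain ⟨x, hx⟩ := (isConj_sr hodd j i).fixedBy_nonempty ⟨x₀, hj⟩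
  exact ⟨x, hx, fun y hy => fixedBy_subsingleton_of_card_stabilizer_eq_two hstab
    (sr_ne_one i) (fun _ => eq_one_or_eq_sr_of_commute hodd) hy hx⟩

/-- For `n` odd and a transitive action of the dihedral group of order `2n` on a
set of cardinality `n`: every reflection `sr i` fixes exactly one point, and
every nontrivial rotation `r i` fixes no point. -/
theorem dihedral_odd_transitive_action_fixed_points
    (n : ℕ) (hn : 0 < n) (hodd : Odd n)
    (X : Type*) [Finite X] [MulAction (DihedralGroup n) X]
    [MulAction.IsPretransitive (DihedralGroup n) X]
    (hX : Nat.card X = n) :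
    (∀ i : ZMod n, ∃! x : X, sr i • x = x) ∧
    (∀ i : ZMod n, i ≠ 0 → ∀ x : X, r i • x ≠ x) :=
  dihedral_odd_transitive_action_fixed_points_general n hodd X hX
end

section
/- Let n be an even positive integer and let X be a finite set of cardinality n with a transitive action of DihedralGroup n. Assume that some point of X is fixed by some reflection sr i. Then: (1) for every j : ZMod n with j ≡ i (mod 2), the reflection sr j fixes exactly two points of X; (2) for every j : ZMod n with j ≢ i (mod 2), the reflection sr j fixes no point of X; and (3) for every i : ZMod n with i ≠ 0, the rotation r i fixes no point of X. -/
/-!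
The stabiliser of a point has index `n` in a group of order `2n`, so the stabiliser of a point
`x` fixed by `sr i` is `{1, sr i}`. Hence rotations act freely, `k ↦ r k • x` is a bijection
`ZMod n → X`, and `sr j` fixes `r k • x` iff the conjugate `r (-k) * sr j * r k = sr (j + 2k)`
is `sr i`. The fixed points of `sr j` thus correspond to the solutions of `2k = i - j`: two of
them, differing by `n / 2`, when `i - j` is even, and none otherwise.
-/

open DihedralGroup MulAction

theorem MulAction.smul_smul_eq_self_iff_conj_smul {G X : Type*} [Group G] [MulAction G X]
    (g h : G) (x : X) : g • h • x = h • x ↔ (h⁻¹ * g * h) • x = x := by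
  rw [mul_smul, mul_smul, inv_smul_eq_iff]

namespace ZMod

theorem castHom_eq_zero_iff_exists_mul {m n : ℕ} (h : m ∣ n) (c : ZMod n) :
    castHom h (ZMod m) c = 0 ↔ ∃ k : ZMod n, m * k = c := by
  constructor
  · obtain ⟨a, rfl⟩ := intCast_surjective c
    intro hc
    rw [map_intCast, intCast_zmod_eq_zero_iff_dvd] at hc
    obtain ⟨t, rfl⟩ := hc
    exact ⟨t, by push_cast; ring⟩
  · rintro ⟨k, rfl⟩
    rw [map_mul, map_natCast, natCast_self, zero_mul]

theorem two_mul_eq_zero_iff {n m : ℕ} (hm : 2 * m = n) (e : ZMod n) :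
    2 * e = 0 ↔ e = 0 ∨ e = m := by
  subst hm
  constructor
  · obtain ⟨a, rfl⟩ := intCast_surjective e
    intro he
    rw [← Int.cast_ofNat, ← Int.cast_mul, intCast_zmod_eq_zero_iff_dvd] at he
    obtain ⟨t, ht⟩ := he
    have ha : a = m * t := by push_cast at ht; linarith
    rcases Int.even_or_odd' t with ⟨s, rfl | rfl⟩
    · left
      rw [intCast_zmod_eq_zero_iff_dvd]
      exact ⟨s, by push_cast; linarith⟩
    · right
      rw [← sub_eq_zero, ← Int.cast_natCast m, ← Int.cast_sub, intCast_zmod_eq_zero_iff_dvd]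
      exact ⟨s, by push_cast; linarith⟩
  · rintro (rfl | rfl)
    · exact mul_zero 2
    · exact_mod_cast natCast_self (2 * m)

theorem card_two_mul_eq {n m : ℕ} (hm : 2 * m = n) (hm0 : m ≠ 0) {c k₀ : ZMod n}
    (hk₀ : 2 * k₀ = c) : Nat.card {k : ZMod n // 2 * k = c} = 2 := by
  have hsol : {k : ZMod n | 2 * k = c} = {k₀, k₀ + m} := by
    ext k
    rw [Set.mem_ofPred_eq, Set.mem_insert_iff, Set.mem_singleton_iff, ← sub_eq_zero (a := k),
      ← sub_eq_iff_eq_add', ← two_mul_eq_zero_iff hm, ← hk₀, mul_sub, sub_eq_zero]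
  have hm_ne : (m : ZMod n) ≠ 0 := by
    rw [Ne, natCast_eq_zero_iff, ← hm]
    exact fun h => hm0 (Nat.eq_zero_of_dvd_of_lt h (by omega))
  change Nat.card ↥{k : ZMod n | 2 * k = c} = 2
  rw [hsol, Nat.card_coe_set_eq, Set.ncard_pair (by simpa using hm_ne)]

end ZMod

namespace DihedralGroup

variable {n : ℕ}

theorem r_eq_one_iff {k : ZMod n} : r k = 1 ↔ k = 0 := by
  rw [one_def, r.injEq]

variable {X : Type*} [MulAction (DihedralGroup n) X]
  [IsPretransitive (DihedralGroup n) X] {i : ZMod n} {x : X}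

theorem smul_eq_self_iff_of_sr_smul_eq_self (hn : 0 < n) (hX : Nat.card X = n)
    (hx : sr i • x = x) {g : DihedralGroup n} : g • x = x ↔ g = 1 ∨ g = sr i := by
  have : NeZero n := ⟨hn.ne'⟩
  have hcard : Nat.card (stabilizer (DihedralGroup n) x) = 2 := by
    have h := (stabilizer (DihedralGroup n) x).index_mul_card
    rw [index_stabilizer_of_transitive, hX, nat_card, mul_comm 2] at h
    exact Nat.eq_of_mul_eq_mul_left hn h
  have hstab : ({1, sr i} : Set (DihedralGroup n)) = stabilizer (DihedralGroup n) x := by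
    refine Set.eq_of_subset_of_ncard_le ?_ ?_ (Set.toFinite _)
    · rintro g (rfl | rfl)
      exacts [one_mem _, hx]
    · rw [← Nat.card_coe_set_eq, SetLike.coe_sort_coe, hcard, Set.ncard_pair (sr_ne_one i).symm]
  rw [← mem_stabilizer_iff, ← SetLike.mem_coe, ← hstab, Set.mem_insert_iff,
    Set.mem_singleton_iff]

theorem r_smul_eq_self_iff (hn : 0 < n) (hX : Nat.card X = n) (hx : sr i • x = x)
    {k : ZMod n} : r k • x = x ↔ k = 0 := by
  simp [smul_eq_self_iff_of_sr_smul_eq_self hn hX hx, r_eq_one_iff]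

theorem sr_smul_eq_self_iff (hn : 0 < n) (hX : Nat.card X = n) (hx : sr i • x = x)
    {j : ZMod n} : sr j • x = x ↔ j = i := by
  simp [smul_eq_self_iff_of_sr_smul_eq_self hn hX hx, sr_ne_one]

theorem sr_smul_r_smul_eq_self_iff (hn : 0 < n) (hX : Nat.card X = n) (hx : sr i • x = x)
    (j k : ZMod n) :
    sr j • r k • x = r k • x ↔ j + 2 * k = i := by
  rw [smul_smul_eq_self_iff_conj_smul, inv_r, r_mul_sr, sr_mul_r,
    sr_smul_eq_self_iff hn hX hx]
  ring_nf

theorem r_smul_r_smul_eq_self_iff (hn : 0 < n) (hX : Nat.card X = n) (hx : sr i • x = x)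
    (m k : ZMod n) : r m • r k • x = r k • x ↔ m = 0 := by
  rw [smul_smul_eq_self_iff_conj_smul, inv_r, r_mul_r, r_mul_r, neg_add_cancel_comm,
    r_smul_eq_self_iff hn hX hx]

theorem bijective_r_smul (hn : 0 < n) (hX : Nat.card X = n) (hx : sr i • x = x) :
    Function.Bijective fun k : ZMod n => r k • x := by
  refine ⟨fun k l hkl => ?_, fun y => ?_⟩
  · rw [← sub_eq_zero, ← r_smul_r_smul_eq_self_iff hn hX hx (k - l) l]
    simpa only [smul_smul, r_mul_r, sub_add_cancel] using hkl
  · obtain ⟨g, rfl⟩ := exists_smul_eq (DihedralGroup n) x y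
    cases g with
    | r k => exact ⟨k, rfl⟩
    | sr k => exact ⟨i - k, by dsimp only; rw [← sr_mul_sr, mul_smul, hx]⟩

end DihedralGroup

theorem dihedral_even_transitive_action_fixed_points_general
    (n : ℕ) (hn : 0 < n) (heven : Even n)
    (X : Type*) [MulAction (DihedralGroup n) X]
    [MulAction.IsPretransitive (DihedralGroup n) X]
    (hX : Nat.card X = n)
    (i : ZMod n) (hi : ∃ x : X, sr i • x = x) :
    (∀ j : ZMod n,
      ZMod.castHom heven.two_dvd (ZMod 2) j = ZMod.castHom heven.two_dvd (ZMod 2) i →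
      Nat.card {x : X // sr j • x = x} = 2) ∧
    (∀ j : ZMod n,
      ZMod.castHom heven.two_dvd (ZMod 2) j ≠ ZMod.castHom heven.two_dvd (ZMod 2) i →
      ∀ x : X, sr j • x ≠ x) ∧
    (∀ k : ZMod n, k ≠ 0 → ∀ x : X, r k • x ≠ x) := by
  obtain ⟨x, hx⟩ := hi
  have hbij := bijective_r_smul hn hX hx
  refine ⟨fun j hj => ?_, fun j hj y hy => ?_, fun k hk y hy => ?_⟩
  · obtain ⟨k₀, hk₀⟩ := (ZMod.castHom_eq_zero_iff_exists_mul heven.two_dvd (i - j)).1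
      (by rw [map_sub, hj, sub_self])
    have hhalf : 2 * (n / 2) = n := Nat.two_mul_div_two_of_even heven
    rw [← ZMod.card_two_mul_eq hhalf (by omega) (by exact_mod_cast hk₀)]
    refine Nat.card_congr ((Equiv.ofBijective _ hbij).subtypeEquiv fun k => ?_).symm
    rw [Equiv.ofBijective_apply, sr_smul_r_smul_eq_self_iff hn hX hx, eq_sub_iff_add_eq']
  · obtain ⟨k, rfl⟩ := hbij.2 y
    rw [sr_smul_r_smul_eq_self_iff hn hX hx] at hy
    have h2k := (ZMod.castHom_eq_zero_iff_exists_mul heven.two_dvd (2 * k)).2 ⟨k, by simp⟩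
    exact hj (by rw [← hy, map_add, h2k, add_zero])
  · obtain ⟨l, rfl⟩ := hbij.2 y
    exact hk ((r_smul_r_smul_eq_self_iff hn hX hx k l).1 hy)

/-- For `n` even and a transitive action of the dihedral group of order `2n` on
a set of cardinality `n`, if some point is fixed by some reflection `sr i`,
then: every reflection `sr j` with `j ≡ i (mod 2)` fixes exactly two points,
every reflection `sr j` with `j ≢ i (mod 2)` fixes no point, and every
nontrivial rotation fixes no point. -/
theorem dihedral_even_transitive_action_fixed_points
    (n : ℕ) (hn : 0 < n) (heven : Even n)
    (X : Type*) [Finite X] [MulAction (DihedralGroup n) X]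
    [MulAction.IsPretransitive (DihedralGroup n) X]
    (hX : Nat.card X = n)
    (i : ZMod n) (hi : ∃ x : X, sr i • x = x) :
    (∀ j : ZMod n,
      ZMod.castHom heven.two_dvd (ZMod 2) j = ZMod.castHom heven.two_dvd (ZMod 2) i →
      Nat.card {x : X // sr j • x = x} = 2) ∧
    (∀ j : ZMod n,
      ZMod.castHom heven.two_dvd (ZMod 2) j ≠ ZMod.castHom heven.two_dvd (ZMod 2) i →
      ∀ x : X, sr j • x ≠ x) ∧
    (∀ k : ZMod n, k ≠ 0 → ∀ x : X, r k • x ≠ x) :=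
  dihedral_even_transitive_action_fixed_points_general n hn heven X hX i hi
end

section
/- Let n be an even positive integer and let X be a finite set of cardinality n with a transitive action of DihedralGroup n such that the stabilizer of some point of X is the subgroup generated by a reflection. Then X is equivariantly isomorphic, as a DihedralGroup n-set, either to the left coset space DihedralGroup n / ⟨sr 0⟩ or to the left coset space DihedralGroup n / ⟨sr 1⟩, each equipped with the left multiplication action. Consequently, such DihedralGroup n-sets fall into at most two equivariant isomorphism classes. -/
open DihedralGroup

private lemma dihedral_conj_sr {n : ℕ} (i j : ZMod n) :
    r j * sr i * (r j)⁻¹ = sr (i - 2 * j) := by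
  have hinv : (r j)⁻¹ = r (-j) := by
    rw [eq_comm, eq_inv_iff_mul_eq_one, r_mul_r, neg_add_cancel, one_def]
  rw [r_mul_sr, hinv, sr_mul_r]
  ring_nf

private lemma exists_equiv_quot {n : ℕ} (X : Type*) [MulAction (DihedralGroup n) X]
    [MulAction.IsPretransitive (DihedralGroup n) X] (y : X) :
    ∃ e : X ≃ (DihedralGroup n ⧸ MulAction.stabilizer (DihedralGroup n) y),
      ∀ (g : DihedralGroup n) (x : X), e (g • x) = g • e x := by
  set f := MulAction.ofQuotientStabilizer (DihedralGroup n) y with hf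
  have hinj := MulAction.injective_ofQuotientStabilizer (DihedralGroup n) y
  have hsurj : Function.Surjective f := by
    intro x
    obtain ⟨g, hg⟩ := MulAction.exists_smul_eq (DihedralGroup n) y x
    exact ⟨QuotientGroup.mk g, by rw [hf, MulAction.ofQuotientStabilizer_mk, hg]⟩
  refine ⟨(Equiv.ofBijective f ⟨hinj, hsurj⟩).symm, fun g x => ?_⟩
  apply hinj
  show f _ = f _
  have hfs : ∀ z, f ((Equiv.ofBijective f ⟨hinj, hsurj⟩).symm z) = z := fun z =>
    Equiv.ofBijective_apply_symm_apply f ⟨hinj, hsurj⟩ z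
  have key : ∀ (g : DihedralGroup n) (q), f (g • q) = g • f q := fun g q =>
    MulAction.ofQuotientStabilizer_smul (DihedralGroup n) y g q
  rw [hfs, key, hfs]

/-- For `n` even and a transitive action of the dihedral group of order `2n` on
a set of cardinality `n` in which the stabilizer of some point is generated by a
reflection, the action is equivariantly isomorphic either to the left coset
space by `⟨sr 0⟩` or by `⟨sr 1⟩`; so there are at most two equivariant
isomorphism classes of such actions. -/
theorem dihedral_even_transitive_action_two_classes
    (n : ℕ) (hn : 0 < n) (heven : Even n)
    (X : Type*) [Finite X] [MulAction (DihedralGroup n) X]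
    [MulAction.IsPretransitive (DihedralGroup n) X]
    (hX : Nat.card X = n)
    (hstab : ∃ (x : X) (i : ZMod n),
      MulAction.stabilizer (DihedralGroup n) x = Subgroup.zpowers (sr i)) :
    (∃ e : X ≃ (DihedralGroup n ⧸ Subgroup.zpowers (sr (0 : ZMod n))),
      ∀ (g : DihedralGroup n) (x : X), e (g • x) = g • e x) ∨
    (∃ e : X ≃ (DihedralGroup n ⧸ Subgroup.zpowers (sr (1 : ZMod n))),
      ∀ (g : DihedralGroup n) (x : X), e (g • x) = g • e x) := by
  haveI : NeZero n := ⟨hn.ne'⟩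
  obtain ⟨x, i, hx⟩ := hstab
  -- find j with i - 2*j = 0 or 1
  have hpar : ∃ j : ZMod n, i - 2 * j = 0 ∨ i - 2 * j = 1 := by
    rcases Nat.even_or_odd i.val with ⟨k, hk⟩ | ⟨k, hk⟩
    · refine ⟨(k : ZMod n), Or.inl ?_⟩
      have : ((i.val : ℕ) : ZMod n) = i := by
        simp [ZMod.natCast_val, ZMod.cast_id]
      rw [sub_eq_zero, ← this, hk]
      push_cast; ring
    · refine ⟨(k : ZMod n), Or.inr ?_⟩
      have : ((i.val : ℕ) : ZMod n) = i := by
        simp [ZMod.natCast_val, ZMod.cast_id]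
      rw [sub_eq_iff_eq_add, ← this, hk]
      push_cast; ring
  obtain ⟨j, hj⟩ := hpar
  have hstab' : MulAction.stabilizer (DihedralGroup n) (r j • x)
      = Subgroup.zpowers (sr (i - 2 * j)) := by
    rw [MulAction.stabilizer_smul_eq_stabilizer_map_conj, hx,
      MonoidHom.map_zpowers]
    congr 1
    simpa [MulAut.conj_apply] using dihedral_conj_sr i j
  rcases hj with h0 | h1
  · left
    rw [h0] at hstab'
    rw [← hstab']
    exact exists_equiv_quot X (r j • x)
  · right
    rw [h1] at hstab'
    rw [← hstab']
    exact exists_equiv_quot X (r j • x)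
end
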